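/- arXiv:1910.08256 — 2 statements merged into one kernel-verified Lean document; each statement's English description precedes it below -/
import Mathlib

section
/- The trace map (h,u) ↦ (h, trace(u)), where trace(u) is the induced endomorphism of the determinant line det M^* = ⊗_{l even} det M^l ⊗ ⊗_{l odd} (det M^l)^∨, defines a morphism of dgLa's from L^*(M^*) to L^0(det M^*) (the latter viewed as a dgLa concentrated in degree 0). -/
/-!
STATEMENT 3: The trace map (h,u) ↦ (h, trace(u)), trace(u) being the induced
endomorphism of the determinant line det M^*, is a morphism of dgLa's from
L^*(M^*) to L⁰(det M^*) (concentrated in degree 0).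

Since det M^* is a free O-module of rank 1 on which the operator part of an
element of L⁰(det M^*) is determined by its coefficient f ∈ O over the induced
trivialization, L⁰(det M^*) is identified with the dgLa of pairs (h,f) ∈ L × O
with bracket ([h₁,h₂], h₁(f₂) - h₂(f₁)), zero differential; and trace(u) is
computed by the (super)trace: the alternating sum over degrees l of the sums of
diagonal coefficients of the component u_l in the chosen O-bases.
-/

open DirectSum

section Setup

variable {R : Type} [CommRing R]
variable {O : Type} [CommRing O] [Algebra R O]
variable {L : Type} [LieRing L] [LieAlgebra R L]
variable {M : ℤ → Type} [∀ i, AddCommGroup (M i)] [∀ i, Module R (M i)]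
  [∀ i, Module O (M i)] [∀ i, IsScalarTower R O (M i)]

/-- the sign (-1)^n for n : ℤ. -/
def sgn (n : ℤ) : ℤ := ((-1 : ℤˣ) ^ n : ℤˣ)

/-- `u` is a graded endomorphism of degree `n`. -/
def HasDeg (n : ℤ) (u : (⨁ i, M i) →ₗ[R] (⨁ i, M i)) : Prop :=
  ∀ (i : ℤ) (x : M i), u (lof R ℤ M i x) ∈ LinearMap.range (lof R ℤ M (i + n))

/-- The defining condition of the set L^*(M^*): `u(r•x) = h(r)•x + r•u(x)`. -/
def PairCond (ι : L →ₗ⁅R⁆ Derivation R O O) (h : L)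
    (u : (⨁ i, M i) →ₗ[R] (⨁ i, M i)) : Prop :=
  ∀ (r : O) (x : ⨁ i, M i), u (r • x) = (ι h r) • x + r • u x

/-- The differential `d u = d_M ∘ u + (-1)^{|u|+1} u ∘ d_M`. -/
noncomputable def Dop (dM : (⨁ i, M i) →ₗ[R] (⨁ i, M i)) (n : ℤ)
    (u : (⨁ i, M i) →ₗ[R] (⨁ i, M i)) : (⨁ i, M i) →ₗ[R] (⨁ i, M i) :=
  dM ∘ₗ u - sgn n • (u ∘ₗ dM)

/-- The graded commutator on the operator components. -/
noncomputable def gbr (n₁ n₂ : ℤ)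
    (u₁ u₂ : (⨁ i, M i) →ₗ[R] (⨁ i, M i)) : (⨁ i, M i) →ₗ[R] (⨁ i, M i) :=
  u₁ ∘ₗ u₂ - sgn (n₁ * n₂) • (u₂ ∘ₗ u₁)

/-- The component `M l → M l` of an endomorphism of `⨁ i, M i`. -/
noncomputable def ucomp (l : ℤ) (u : (⨁ i, M i) →ₗ[R] (⨁ i, M i)) :
    M l →ₗ[R] M l :=
  (DirectSum.component R ℤ M l) ∘ₗ u ∘ₗ (lof R ℤ M l)

/-- The supertrace of an operator relative to chosen `O`-bases `b l` of the `M l`,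
`l` ranging over the (finite) support `S` of the bounded complex `M^*`:
this is the coefficient of the induced endomorphism of the determinant line
`det M^* = ⊗_{l even} det M^l ⊗ ⊗_{l odd} (det M^l)^∨` over its induced
trivialization. -/
noncomputable def strace {κ : ℤ → Type} [∀ l, Fintype (κ l)]
    (S : Finset ℤ) (b : ∀ l, Module.Basis (κ l) O (M l))
    (u : (⨁ i, M i) →ₗ[R] (⨁ i, M i)) : O :=
  ∑ l ∈ S, sgn l • (∑ k : κ l, ((b l).repr (ucomp l u ((b l) k))) k)

end Setup

section Helpers

set_option linter.unusedSectionVars false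

variable {R : Type} [CommRing R] {O : Type} [CommRing O] [Algebra R O]
  {L : Type} [LieRing L] [LieAlgebra R L]
  {M : ℤ → Type} [∀ i, AddCommGroup (M i)] [∀ i, Module R (M i)]
  [∀ i, Module O (M i)] [∀ i, IsScalarTower R O (M i)]
  {κ : ℤ → Type} [∀ l, Fintype (κ l)]

/-- The component `M a → M c` of an endomorphism of the direct sum. -/
noncomputable def ucl (a c : ℤ) (u : (⨁ i, M i) →ₗ[R] (⨁ i, M i)) : M a →ₗ[R] M c :=
  (DirectSum.component R ℤ M c) ∘ₗ u ∘ₗ (lof R ℤ M a)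

/-- The trace of an endomorphism of `M a` w.r.t. the basis `b a`. -/
noncomputable def trl (b : ∀ l, Module.Basis (κ l) O (M l)) (a : ℤ)
    (f : M a →ₗ[R] M a) : O := ∑ k : κ a, ((b a).repr (f ((b a) k))) k

lemma lof_smul (a : ℤ) (r : O) (x : M a) :
    lof R ℤ M a (r • x) = r • lof R ℤ M a x :=
  (DFinsupp.single_smul r x).symm ▸ rfl

lemma component_smul (c : ℤ) (r : O) (x : ⨁ i, M i) :
    DirectSum.component R ℤ M c (r • x) = r • DirectSum.component R ℤ M c x := rfl

lemma apply_lof_of_hasDeg {n : ℤ} {u : (⨁ i, M i) →ₗ[R] (⨁ i, M i)}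
    (hu : HasDeg n u) {a e : ℤ} (he : a + n = e) (x : M a) :
    u (lof R ℤ M a x) = lof R ℤ M e (ucl a e u x) := by
  subst he
  obtain ⟨y, hy⟩ := hu a x
  rw [← hy]
  congr 1
  rw [ucl]
  simp only [LinearMap.comp_apply]
  rw [← hy, DirectSum.component.lof_self]

lemma ucl_comp {n : ℤ} {u₂ : (⨁ i, M i) →ₗ[R] (⨁ i, M i)}
    (hu₂ : HasDeg n u₂) (u₁ : (⨁ i, M i) →ₗ[R] (⨁ i, M i))
    {a e : ℤ} (he : a + n = e) (c : ℤ) :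
    ucl a c (u₁ ∘ₗ u₂) = (ucl e c u₁) ∘ₗ (ucl a e u₂) := by
  ext x
  simp only [ucl, LinearMap.comp_apply]
  rw [apply_lof_of_hasDeg hu₂ he]
  simp [ucl, DirectSum.component.lof_self]

lemma ucl_eq_zero {n : ℤ} {u : (⨁ i, M i) →ₗ[R] (⨁ i, M i)}
    (hu : HasDeg n u) {a c : ℤ} (hc : a + n ≠ c) :
    ucl (M := M) a c u = 0 := by
  ext x
  simp only [ucl, LinearMap.comp_apply, LinearMap.zero_apply]
  rw [apply_lof_of_hasDeg hu rfl, DirectSum.component.of, dif_neg hc]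

/-- O-linearity of a component map. -/
def OLin {a c : ℤ} (f : M a →ₗ[R] M c) : Prop :=
  ∀ (r : O) (x : M a), f (r • x) = r • f x

lemma ucl_olin {ι : L →ₗ⁅R⁆ Derivation R O O} {h : L}
    {u : (⨁ i, M i) →ₗ[R] (⨁ i, M i)} (hu : PairCond ι h u)
    {a c : ℤ} (hac : c ≠ a) : OLin (O := O) (ucl (M := M) a c u) := by
  intro r x
  simp only [ucl, LinearMap.comp_apply]
  rw [lof_smul, hu, map_add, component_smul c r, component_smul c (ι h r),
    DirectSum.component.of, dif_neg (fun hh => hac hh.symm), smul_zero, zero_add]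

lemma ucl_olin_of_olin {u : (⨁ i, M i) →ₗ[R] (⨁ i, M i)}
    (hou : ∀ (r : O) (x : ⨁ i, M i), u (r • x) = r • u x)
    (a c : ℤ) : OLin (O := O) (ucl (M := M) a c u) := by
  intro r x
  simp only [ucl, LinearMap.comp_apply]
  rw [lof_smul, hou, component_smul]

lemma ucl_semi {ι : L →ₗ⁅R⁆ Derivation R O O} {h : L}
    {u : (⨁ i, M i) →ₗ[R] (⨁ i, M i)} (hu : PairCond ι h u)
    (a : ℤ) (r : O) (x : M a) :
    ucl a a u (r • x) = ι h r • x + r • ucl a a u x := by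
  simp only [ucl, LinearMap.comp_apply]
  rw [lof_smul, hu, map_add, component_smul a r, component_smul a (ι h r),
    DirectSum.component.lof_self]

lemma ucl_sub (a c : ℤ) (u v : (⨁ i, M i) →ₗ[R] (⨁ i, M i)) :
    ucl a c (u - v) = ucl a c u - ucl a c v := by
  ext x; simp [ucl]

lemma ucl_zsmul (a c : ℤ) (z : ℤ) (u : (⨁ i, M i) →ₗ[R] (⨁ i, M i)) :
    ucl a c (z • u) = z • ucl a c u := by
  ext x; simp [ucl]

section Trace
variable (b : ∀ l, Module.Basis (κ l) O (M l))

lemma trl_zero (a : ℤ) : trl b a (0 : M a →ₗ[R] M a) = 0 := by simp [trl]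

lemma trl_sub (a : ℤ) (f g : M a →ₗ[R] M a) :
    trl b a (f - g) = trl b a f - trl b a g := by
  simp [trl, Finset.sum_sub_distrib]

lemma trl_zsmul (a : ℤ) (z : ℤ) (f : M a →ₗ[R] M a) :
    trl b a (z • f) = z • trl b a f := by
  simp [trl, Finset.smul_sum]

lemma trl_comm {a c : ℤ} (f : M a →ₗ[R] M c) (g : M c →ₗ[R] M a)
    (hf : OLin (O := O) f) (hg : OLin (O := O) g) :
    trl b a (g ∘ₗ f) = trl b c (f ∘ₗ g) := by
  unfold OLin at hf hg
  have key : ∀ (j : κ a), ((b a).repr (g (f (b a j)))) j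
      = ∑ i : κ c, ((b c).repr (f (b a j))) i * ((b a).repr (g (b c i))) j := by
    intro j
    conv_lhs => rw [← (b c).sum_repr (f (b a j))]
    rw [map_sum]
    simp only [hg, map_sum, map_smul, Finsupp.coe_finset_sum, Finsupp.coe_smul,
      Finset.sum_apply, Pi.smul_apply, smul_eq_mul]
  have key2 : ∀ (i : κ c), ((b c).repr (f (g (b c i)))) i
      = ∑ j : κ a, ((b a).repr (g (b c i))) j * ((b c).repr (f (b a j))) i := by
    intro i
    conv_lhs => rw [← (b a).sum_repr (g (b c i))]
    rw [map_sum]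
    simp only [hf, map_sum, map_smul, Finsupp.coe_finset_sum, Finsupp.coe_smul,
      Finset.sum_apply, Pi.smul_apply, smul_eq_mul]
  simp only [trl, LinearMap.comp_apply, key, key2]
  rw [Finset.sum_comm]
  congr 1; ext i; congr 1; ext j; ring

lemma trl_comm_semi {ι : L →ₗ⁅R⁆ Derivation R O O} {h₁ h₂ : L} {a : ℤ}
    (f g : M a →ₗ[R] M a)
    (hf : ∀ (r : O) (x : M a), f (r • x) = ι h₁ r • x + r • f x)
    (hg : ∀ (r : O) (x : M a), g (r • x) = ι h₂ r • x + r • g x) :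
    trl b a (f ∘ₗ g) - trl b a (g ∘ₗ f)
      = ι h₁ (trl b a g) - ι h₂ (trl b a f) := by
  have key : ∀ (u : M a →ₗ[R] M a) (h : L)
      (hu : ∀ (r : O) (x : M a), u (r • x) = ι h r • x + r • u x)
      (v : M a →ₗ[R] M a) (j : κ a),
      ((b a).repr (u (v (b a j)))) j
        = ι h (((b a).repr (v (b a j))) j)
          + ∑ i : κ a, ((b a).repr (v (b a j))) i * ((b a).repr (u (b a i))) j := by
    intro u h hu v j
    conv_lhs => rw [← (b a).sum_repr (v (b a j))]
    rw [map_sum]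
    simp only [hu]
    rw [Finset.sum_add_distrib]
    simp only [map_add, map_sum, map_smul, Finsupp.coe_finset_sum, Finsupp.coe_add,
      Finsupp.coe_smul, Finset.sum_apply, Pi.add_apply, Pi.smul_apply, smul_eq_mul]
    congr 1
    · rw [Finset.sum_eq_single j]
      · simp [Module.Basis.repr_self]
      · intro i _ hij
        simp [Module.Basis.repr_self, Finsupp.single_apply, hij]
      · simp
  simp only [trl, LinearMap.comp_apply]
  rw [Finset.sum_congr rfl (fun j _ => key f h₁ hf g j),
      Finset.sum_congr rfl (fun j _ => key g h₂ hg f j),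
      Finset.sum_add_distrib, Finset.sum_add_distrib, ← map_sum, ← map_sum]
  have : (∑ j : κ a, ∑ i : κ a, ((b a).repr (g (b a j))) i * ((b a).repr (f (b a i))) j)
      = ∑ j : κ a, ∑ i : κ a, ((b a).repr (f (b a j))) i * ((b a).repr (g (b a i))) j := by
    rw [Finset.sum_comm]; congr 1; ext i; congr 1; ext j; ring
  rw [this]; ring

lemma trl_zero_of_subsingleton {a : ℤ} (hs : Subsingleton (M a))
    (f : M a →ₗ[R] M a) : trl b a f = 0 := by
  unfold trl
  have : ∀ k : κ a, f (b a k) = 0 := fun k => Subsingleton.elim _ _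
  simp [this]

lemma trl_zero_of_comp {a c : ℤ} (hs : Subsingleton (M c))
    (f : M a →ₗ[R] M c) (g : M c →ₗ[R] M a) : trl b a (g ∘ₗ f) = 0 := by
  unfold trl
  have : ∀ k : κ a, f (b a k) = 0 := fun k => Subsingleton.elim _ _
  simp [this]

lemma strace_eq (S : Finset ℤ) (u : (⨁ i, M i) →ₗ[R] (⨁ i, M i)) :
    strace S b u = ∑ l ∈ S, sgn l • trl b l (ucl l l u) := rfl

end Trace

lemma sgn_eq (n : ℤ) : sgn n = (Int.negOnePow n : ℤ) := rfl

lemma sgn_zero' : sgn 0 = 1 := by simp [sgn_eq]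

lemma sgn_add' (m n : ℤ) : sgn (m + n) = sgn m * sgn n := by
  simp [sgn_eq, Int.negOnePow_add]

lemma sgn_one' : sgn 1 = -1 := by simp [sgn_eq]

lemma sgn_add_one' (l : ℤ) : sgn (l + 1) = - sgn l := by
  rw [sgn_add', sgn_one']; ring

lemma sgn_neg_mul_self' (n : ℤ) : sgn (-(n * n)) = sgn n := by
  rw [sgn_eq, sgn_eq, Int.negOnePow_neg]
  rcases Int.even_or_odd n with he | ho
  · rw [Int.negOnePow_even _ (he.mul_right n), Int.negOnePow_even _ he]
  · rw [Int.negOnePow_odd _ (ho.mul ho), Int.negOnePow_odd _ ho]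

/-- The telescoping/reindexing lemma: if `s` vanishes outside
`{m | m ∈ S ∧ m + n ∈ S}` then the shifted signed sum equals the plain one. -/
lemma shift_cancel {O : Type} [CommRing O] (S : Finset ℤ) (n : ℤ) (s : ℤ → O)
    (hsupp : ∀ m : ℤ, (m ∉ S ∨ m + n ∉ S) → s m = 0) :
    ∑ l ∈ S, sgn (l - n) • s (l - n) = ∑ l ∈ S, sgn l • s l := by
  have himg : ∑ l ∈ S, sgn (l - n) • s (l - n)
      = ∑ m ∈ S.image (· - n), sgn m • s m := by
    rw [Finset.sum_image (by intro x _ y _ hxy; exact sub_left_injective hxy)]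
  rw [himg]
  have h1 : ∑ m ∈ S.image (· - n), sgn m • s m
      = ∑ m ∈ S ∪ S.image (· - n), sgn m • s m := by
    apply Finset.sum_subset Finset.subset_union_right
    intro m _ hmi
    rw [hsupp m (Or.inr (fun hc => hmi (Finset.mem_image.2 ⟨m + n, hc, by omega⟩))),
      smul_zero]
  have h2 : ∑ m ∈ S, sgn m • s m = ∑ m ∈ S ∪ S.image (· - n), sgn m • s m := by
    apply Finset.sum_subset Finset.subset_union_left
    intro m _ hms
    rw [hsupp m (Or.inl hms), smul_zero]
  rw [h1, ← h2]

end Helpers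


/-- The trace map `(h,u) ↦ (h, trace(u))` is a morphism of
dgLa's from `L^*(M^*)` to the degree-0 dgLa `L⁰(det M^*) ≅ L ⋉ O`:
(a) it vanishes on components of nonzero degree (it is degree-preserving);
(b) it annihilates differentials, `trace(du) = 0` (the target differential is 0);
(c) on degree-0 pairs it intertwines the brackets:
    `trace([u₁,u₂]) = h₁(trace u₂) - h₂(trace u₁)`;
(d) it also kills the brackets of elements of opposite nonzero degrees. -/
theorem trace_dgla_morphism
    {R : Type} [CommRing R] {O : Type} [CommRing O] [Algebra R O]
    {L : Type} [LieRing L] [LieAlgebra R L]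
    {M : ℤ → Type} [∀ i, AddCommGroup (M i)] [∀ i, Module R (M i)]
    [∀ i, Module O (M i)] [∀ i, IsScalarTower R O (M i)]
    {κ : ℤ → Type} [∀ l, Fintype (κ l)]
    (S : Finset ℤ) (hS : ∀ i : ℤ, i ∉ S → Subsingleton (M i))
    (b : ∀ l, Module.Basis (κ l) O (M l))
    (ι : L →ₗ⁅R⁆ Derivation R O O)
    (dM : (⨁ i, M i) →ₗ[R] (⨁ i, M i))
    (hdM_deg : HasDeg 1 dM)
    (hdM_O : ∀ (r : O) (x : ⨁ i, M i), dM (r • x) = r • dM x)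
    (hdd : dM ∘ₗ dM = 0) :
    -- (a) degree-preserving: zero trace in nonzero degrees
    (∀ (n : ℤ), n ≠ 0 → ∀ u : (⨁ i, M i) →ₗ[R] (⨁ i, M i), HasDeg n u →
        strace S b u = 0) ∧
    -- (b) compatibility with the differentials: trace(du) = 0
    (∀ (n : ℤ) (h : L) (u : (⨁ i, M i) →ₗ[R] (⨁ i, M i)),
        PairCond ι h u → HasDeg n u → strace S b (Dop dM n u) = 0) ∧
    -- (c) compatibility with the brackets in degree 0
    (∀ (h₁ h₂ : L) (u₁ u₂ : (⨁ i, M i) →ₗ[R] (⨁ i, M i)),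
        PairCond ι h₁ u₁ → PairCond ι h₂ u₂ → HasDeg 0 u₁ → HasDeg 0 u₂ →
        strace S b (gbr 0 0 u₁ u₂) =
          ι h₁ (strace S b u₂) - ι h₂ (strace S b u₁)) ∧
    -- (d) brackets of elements of opposite nonzero degrees have zero trace
    (∀ (n : ℤ), n ≠ 0 → ∀ u₁ u₂ : (⨁ i, M i) →ₗ[R] (⨁ i, M i),
        HasDeg n u₁ → HasDeg (-n) u₂ →
        PairCond ι 0 u₁ → PairCond ι 0 u₂ →
        strace S b (gbr n (-n) u₁ u₂) = 0) := by
  obtain ⟨hset⟩ : Nonempty Unit := ⟨()⟩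
  refine ⟨?_, ?_, ?_, ?_⟩
  · -- (a)
    intro n hn u hu
    rw [strace_eq]
    apply Finset.sum_eq_zero
    intro l _
    rw [ucl_eq_zero hu (show l + n ≠ l by omega), trl_zero, smul_zero]
  · -- (b)
    intro n h u hPC hu
    by_cases hn : n = -1
    · subst hn
      set s : ℤ → O := fun m => trl b m (ucl m m (u ∘ₗ dM)) with hs
      have hsupp : ∀ m : ℤ, (m ∉ S ∨ m + 1 ∉ S) → s m = 0 := by
        intro m hm
        rcases hm with hm | hm
        · exact trl_zero_of_subsingleton b (hS m hm) _
        · rw [hs]; dsimp only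
          rw [ucl_comp hdM_deg u (rfl : m + 1 = m + 1) m]
          exact trl_zero_of_comp b (hS _ hm) _ _
      have key : ∀ l : ℤ, trl b l (ucl l l (dM ∘ₗ u)) = s (l - 1) := by
        intro l
        rw [ucl_comp hu dM (show l + -1 = l - 1 by omega) l]
        rw [trl_comm b (ucl l (l-1) u) (ucl (l-1) l dM)
            (ucl_olin hPC (by omega)) (ucl_olin_of_olin hdM_O _ _)]
        rw [hs]; dsimp only
        rw [ucl_comp hdM_deg u (show l - 1 + 1 = l by omega) (l-1)]
      have hsgnm1 : sgn (-1 : ℤ) = -1 := by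
        have := sgn_add_one' (-1); rw [show (-1 : ℤ) + 1 = 0 by ring, sgn_zero'] at this
        omega
      have step : strace S b (Dop dM (-1) u)
          = ∑ l ∈ S, (sgn l • s (l - 1) + sgn l • s l) := by
        rw [strace_eq]
        apply Finset.sum_congr rfl
        intro l _
        rw [Dop, ucl_sub, ucl_zsmul, trl_sub, trl_zsmul, hsgnm1, key l]
        have : trl b l (ucl l l (u ∘ₗ dM)) = s l := rfl
        rw [this]
        simp only [zsmul_eq_mul]
        push_cast
        ring
      rw [step, Finset.sum_add_distrib]
      have left : ∑ l ∈ S, sgn l • s (l - 1) = - ∑ l ∈ S, sgn (l - 1) • s (l - 1) := by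
        rw [← Finset.sum_neg_distrib]
        apply Finset.sum_congr rfl
        intro l _
        have hl : sgn l = - sgn (l - 1) := by
          have := sgn_add_one' (l - 1); rw [show l - 1 + 1 = l by ring] at this
          omega
        rw [hl, neg_smul]
      rw [left, shift_cancel S 1 s hsupp, neg_add_cancel]
    · rw [strace_eq]
      apply Finset.sum_eq_zero
      intro l _
      rw [Dop, ucl_sub, ucl_zsmul, trl_sub, trl_zsmul]
      rw [ucl_comp hu dM (rfl : l + n = l + n) l,
        ucl_eq_zero hdM_deg (show l + n + 1 ≠ l by omega), LinearMap.zero_comp]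
      rw [ucl_comp hdM_deg u (rfl : l + 1 = l + 1) l,
        ucl_eq_zero hu (show l + 1 + n ≠ l by omega), LinearMap.zero_comp]
      rw [trl_zero, smul_zero, sub_zero, smul_zero]
  · -- (c)
    intro h₁ h₂ u₁ u₂ hp₁ hp₂ hd₁ hd₂
    have key : ∀ l : ℤ, trl b l (ucl l l (gbr 0 0 u₁ u₂))
        = ι h₁ (trl b l (ucl l l u₂)) - ι h₂ (trl b l (ucl l l u₁)) := by
      intro l
      rw [gbr, show (0 : ℤ) * 0 = 0 by ring, sgn_zero', one_smul, ucl_sub, trl_sub]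
      rw [ucl_comp hd₂ u₁ (add_zero l) l, ucl_comp hd₁ u₂ (add_zero l) l]
      exact trl_comm_semi b (ucl l l u₁) (ucl l l u₂) (ucl_semi hp₁ l) (ucl_semi hp₂ l)
    rw [strace_eq, strace_eq, strace_eq, map_sum, map_sum]
    rw [← Finset.sum_sub_distrib]
    apply Finset.sum_congr rfl
    intro l _
    rw [key l, smul_sub, map_zsmul, map_zsmul]
  · -- (d)
    intro n hn u₁ u₂ hd₁ hd₂ hp₁ hp₂
    have ho₁ : ∀ (r : O) (x : ⨁ i, M i), u₁ (r • x) = r • u₁ x := by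
      intro r x; rw [hp₁ r x]; simp
    have ho₂ : ∀ (r : O) (x : ⨁ i, M i), u₂ (r • x) = r • u₂ x := by
      intro r x; rw [hp₂ r x]; simp
    set s : ℤ → O := fun m => trl b m (ucl m m (u₂ ∘ₗ u₁)) with hs
    have hsupp : ∀ m : ℤ, (m ∉ S ∨ m + n ∉ S) → s m = 0 := by
      intro m hm
      rcases hm with hm | hm
      · exact trl_zero_of_subsingleton b (hS m hm) _
      · rw [hs]; dsimp only
        rw [ucl_comp hd₁ u₂ (rfl : m + n = m + n) m]
        exact trl_zero_of_comp b (hS _ hm) _ _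
    have key : ∀ l : ℤ, trl b l (ucl l l (u₁ ∘ₗ u₂)) = s (l - n) := by
      intro l
      rw [ucl_comp hd₂ u₁ (show l + -n = l - n by omega) l]
      rw [trl_comm b (ucl l (l - n) u₂) (ucl (l - n) l u₁)
          (ucl_olin_of_olin ho₂ _ _) (ucl_olin_of_olin ho₁ _ _)]
      rw [hs]; dsimp only
      rw [ucl_comp hd₁ u₂ (show l - n + n = l by omega) (l - n)]
    have hsgn : sgn (n * -n) = sgn n := by
      rw [show n * -n = -(n * n) by ring, sgn_neg_mul_self']
    rw [strace_eq]
    have step : ∀ l : ℤ, sgn l • trl b l (ucl l l (gbr n (-n) u₁ u₂))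
        = sgn n • (sgn (l - n) • s (l - n)) - sgn n • (sgn l • s l) := by
      intro l
      rw [gbr, ucl_sub, ucl_zsmul, trl_sub, trl_zsmul, hsgn, key l]
      have h0 : trl b l (ucl l l (u₂ ∘ₗ u₁)) = s l := rfl
      have hA := sgn_add' (l - n) n
      rw [show l - n + n = l by ring] at hA
      rw [h0]
      simp only [zsmul_eq_mul]
      rw [hA]
      push_cast
      ring
    rw [Finset.sum_congr rfl (fun l _ => step l), Finset.sum_sub_distrib,
      ← Finset.smul_sum, ← Finset.smul_sum, shift_cancel S n s hsupp, sub_self]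
end

section
/- Extension lemma for products of simplices: given forms α₀,…,α_m ∈ A^*(Δ_{m−1} × Δ_n) and β₀,…,β_n ∈ A^*(Δ_m × Δ_{n−1}) satisfying the compatibility conditions d_{i,m−1}^*(α_j) = d_{j−1,m−1}^*(α_i) for 0 ≤ i < j ≤ m, d_{i,n−1}^*(β_j) = d_{j−1,n−1}^*(β_i) for 0 ≤ i < j ≤ n, and d_{i,n}^*(α_j) = d_{j,m}^*(β_i) for 0 ≤ i ≤ n and 0 ≤ j ≤ m, there exists γ ∈ A^*(Δ_m × Δ_n) with d_{j,m}^*(γ) = α_j for all j and d_{i,n}^*(γ) = β_i for all i. -/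
/-!
STATEMENT 7: Extension lemma for products of simplices. With
A^*(Δ_m × Δ_n) := A^*(Δ_m) ⊗_ℂ A^*(Δ_n) and the two families of coface
restriction maps d_{j,m}^* ⊗ id and id ⊗ d_{i,n}^*, compatible boundary data
(α_j, β_i) ∈ A^*(∂(Δ_m × Δ_n)) extend to some γ ∈ A^*(Δ_m × Δ_n).
(Here m = M+2, n = N+2 so that all the coface maps involved exist.)
-/

/-- A model of the polynomial de Rham algebra `A^*(Δ_n)` (see STATEMENT 4). -/
structure SimplexForms (n : ℕ) where
  A : Type
  [ringA : Ring A]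
  [algA : Algebra ℂ A]
  grading : ℕ → Submodule ℂ A
  [gradedA : GradedAlgebra grading]
  gcomm : ∀ (p q : ℕ) (a b : A), a ∈ grading p → b ∈ grading q →
    a * b = ((-1 : ℤ) ^ (p * q)) • (b * a)
  d : A →ₗ[ℂ] A
  d_mem : ∀ (q : ℕ) (a : A), a ∈ grading q → d a ∈ grading (q + 1)
  d_sq : ∀ a : A, d (d a) = 0
  leibniz : ∀ (p : ℕ) (a b : A), a ∈ grading p →
    d (a * b) = d a * b + ((-1 : ℤ) ^ p) • (a * d b)
  x : Fin (n + 1) → A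
  x_mem : ∀ i, x i ∈ grading 0
  sum_x : ∑ i, x i = 1
  sum_dx : ∑ i, d (x i) = 0

attribute [instance] SimplexForms.ringA SimplexForms.algA SimplexForms.gradedA

/-- `Ω` is the polynomial de Rham algebra `A^*(Δ_n)`: universal property. -/
def IsPolyDeRham {n : ℕ} (Ω : SimplexForms n) : Prop :=
  ∀ B : SimplexForms n, ∃! φ : Ω.A →ₐ[ℂ] B.A,
    (∀ a, φ (Ω.d a) = B.d (φ a)) ∧
    (∀ (p : ℕ) (a : Ω.A), a ∈ Ω.grading p → φ a ∈ B.grading p) ∧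
    (∀ i, φ (Ω.x i) = B.x i)

/-- The property of being the pullback morphism `a^*` induced by
`a : [n] → [m]`: a morphism of dgas (commuting with `d` and preserving the
grading) with `φ(x_j) = Σ_{i : a i = j} x_i`. -/
def PullbackProp {m n : ℕ} (Ωm : SimplexForms m) (Ωn : SimplexForms n)
    (a : Fin (n + 1) → Fin (m + 1)) (φ : Ωm.A →ₐ[ℂ] Ωn.A) : Prop :=
  (∀ y, φ (Ωm.d y) = Ωn.d (φ y)) ∧
  (∀ (p : ℕ) (y : Ωm.A), y ∈ Ωm.grading p → φ y ∈ Ωn.grading p) ∧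
  (∀ j : Fin (m + 1),
    φ (Ωm.x j) = ∑ i ∈ Finset.univ.filter (fun i => a i = j), Ωn.x i)


open TensorProduct




lemma succAbove_val {n : ℕ} (p : Fin (n+1)) (l : Fin n) :
    (p.succAbove l).1 = if l.1 < p.1 then l.1 else l.1 + 1 := by
  rw [Fin.succAbove]
  split
  · simp_all [Fin.lt_def]
  · rw [if_neg (by simp_all [Fin.lt_def])]
    simp

/-- factor a function avoiding value `w` through `succAbove w`. -/
lemma factor_through {P Q : ℕ} (g : Fin P → Fin (Q+2)) (w : Fin (Q+2))
    (hg : ∀ l, (g l).1 ≠ w.1) : ∃ h : Fin P → Fin (Q+1), g = w.succAbove ∘ h := by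
  refine ⟨fun l => ⟨if (g l).1 < w.1 then (g l).1 else (g l).1 - 1, by
    have := (g l).isLt; have := hg l; have := w.isLt; split <;> omega⟩, ?_⟩
  funext l
  apply Fin.ext
  simp only [Function.comp_apply, succAbove_val]
  have := (g l).isLt; have := hg l; have := w.isLt
  split <;> [skip; split] <;> omega

/-- Re-structure `Ωn` as an object of `SimplexForms m` via a vertex map `a`. -/
def mkSF {n : ℕ} (Ωn : SimplexForms n) (m : ℕ) (a : Fin (n+1) → Fin (m+1)) :
    SimplexForms m where
  A := Ωn.A
  grading := Ωn.grading
  gcomm := Ωn.gcomm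
  d := Ωn.d
  d_mem := Ωn.d_mem
  d_sq := Ωn.d_sq
  leibniz := Ωn.leibniz
  x := fun j => ∑ i ∈ Finset.univ.filter (fun i => a i = j), Ωn.x i
  x_mem := fun j => Submodule.sum_mem _ (fun i _ => Ωn.x_mem i)
  sum_x := by
    rw [Finset.sum_fiberwise Finset.univ a Ωn.x]
    exact Ωn.sum_x
  sum_dx := by
    simp_rw [map_sum]
    rw [Finset.sum_fiberwise Finset.univ a (fun i => Ωn.d (Ωn.x i))]
    exact Ωn.sum_dx

lemma pullbackProp_iff_mkSF {m n : ℕ} (Ωm : SimplexForms m) (Ωn : SimplexForms n)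
    (a : Fin (n + 1) → Fin (m + 1)) (φ : Ωm.A →ₐ[ℂ] (mkSF Ωn m a).A) :
    ((∀ y, φ (Ωm.d y) = (mkSF Ωn m a).d (φ y)) ∧
    (∀ (p : ℕ) (y : Ωm.A), y ∈ Ωm.grading p → φ y ∈ (mkSF Ωn m a).grading p) ∧
    (∀ i, φ (Ωm.x i) = (mkSF Ωn m a).x i)) ↔ PullbackProp Ωm Ωn a φ := Iff.rfl

section

variable (F : ∀ k, SimplexForms k) (hF : ∀ k, IsPolyDeRham (F k))

noncomputable def pba (m n : ℕ) (a : Fin (n+1) → Fin (m+1)) :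
    (F m).A →ₐ[ℂ] (F n).A :=
  (hF m (mkSF (F n) m a)).exists.choose

lemma pba_prop (m n : ℕ) (a : Fin (n+1) → Fin (m+1)) :
    PullbackProp (F m) (F n) a (pba F hF m n a) :=
  (pullbackProp_iff_mkSF _ _ _ _).mp (hF m (mkSF (F n) m a)).exists.choose_spec

lemma pba_unique {m n : ℕ} {a : Fin (n+1) → Fin (m+1)} {φ : (F m).A →ₐ[ℂ] (F n).A}
    (h : PullbackProp (F m) (F n) a φ) : φ = pba F hF m n a :=
  (hF m (mkSF (F n) m a)).unique ((pullbackProp_iff_mkSF _ _ _ _).mpr h)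
    ((pullbackProp_iff_mkSF _ _ _ _).mpr (pba_prop F hF m n a))

end

lemma PullbackProp.comp {m n p : ℕ} {Ωm : SimplexForms m} {Ωn : SimplexForms n}
    {Ωp : SimplexForms p} {a : Fin (n+1) → Fin (m+1)} {b : Fin (p+1) → Fin (n+1)}
    {φ : Ωm.A →ₐ[ℂ] Ωn.A} {ψ : Ωn.A →ₐ[ℂ] Ωp.A}
    (h1 : PullbackProp Ωm Ωn a φ) (h2 : PullbackProp Ωn Ωp b ψ) :
    PullbackProp Ωm Ωp (a ∘ b) (ψ.comp φ) := by
  obtain ⟨hd1, hg1, hx1⟩ := h1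
  obtain ⟨hd2, hg2, hx2⟩ := h2
  refine ⟨fun y => by simp [hd1, hd2], fun q y hy => hg2 _ _ (hg1 _ _ hy), fun j => ?_⟩
  simp only [AlgHom.comp_apply, hx1, map_sum, hx2]
  rw [Finset.sum_fiberwise_eq_sum_filter Finset.univ
    (Finset.univ.filter (fun i => a i = j)) b Ωp.x]
  apply Finset.sum_congr
  · ext l
    simp
  · intros; rfl

lemma pullbackProp_id {m : ℕ} (Ωm : SimplexForms m) :
    PullbackProp Ωm Ωm id (AlgHom.id ℂ Ωm.A) := by
  refine ⟨fun y => rfl, fun q y hy => hy, fun j => ?_⟩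
  simp only [AlgHom.id_apply, id_eq]
  rw [Finset.filter_eq' Finset.univ j]
  simp

section
variable (F : ∀ k, SimplexForms k) (hF : ∀ k, IsPolyDeRham (F k))

lemma pba_comp (m n p : ℕ) (a : Fin (n+1) → Fin (m+1)) (b : Fin (p+1) → Fin (n+1)) :
    (pba F hF n p b).comp (pba F hF m n a) = pba F hF m p (a ∘ b) :=
  pba_unique F hF ((pba_prop F hF m n a).comp (pba_prop F hF n p b))

lemma pba_id (m : ℕ) : pba F hF m m id = AlgHom.id ℂ (F m).A :=
  (pba_unique F hF (pullbackProp_id (F m))).symm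

lemma pba_x (m n : ℕ) (a : Fin (n+1) → Fin (m+1)) (j : Fin (m+1)) :
    pba F hF m n a ((F m).x j)
      = ∑ i ∈ Finset.univ.filter (fun i => a i = j), (F n).x i :=
  (pba_prop F hF m n a).2.2 j

end

section
variable (F : ∀ k, SimplexForms k) (hF : ∀ k, IsPolyDeRham (F k))

/-- The coface pullback `d_i^*`. -/
noncomputable def fpb (k : ℕ) (i : Fin (k+2)) : (F (k+1)).A →ₐ[ℂ] (F k).A :=
  pba F hF (k+1) k (Fin.succAbove i)

/-- The degeneracy pullback `σ_r^*`. -/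
noncomputable def spb (k r : ℕ) : (F k).A →ₐ[ℂ] (F (k+1)).A :=
  pba F hF k (k+1) (fun l => ⟨if l.1 ≤ r then min l.1 k else l.1 - 1, by have := l.isLt; split <;> omega⟩)

/-- The "extension" pullback `ϖ_i^*` sending the extra vertex to `i`. -/
noncomputable def epb (k : ℕ) (i : Fin (k+1)) : (F k).A →ₐ[ℂ] (F (k+1)).A :=
  pba F hF k (k+1) (fun l => if h : l.1 < k+1 then ⟨l.1, h⟩ else i)

lemma fpb_x_self (k : ℕ) (j : Fin (k+2)) (v : Fin (k+2)) (hv : v.1 = j.1) :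
    fpb F hF k j ((F (k+1)).x v) = 0 := by
  rw [fpb, pba_x]
  rw [show (Finset.univ.filter (fun i => j.succAbove i = v)) = ∅ from ?_]
  · simp
  · rw [Finset.filter_eq_empty_iff]
    intro l _ h
    have := congrArg Fin.val h
    rw [succAbove_val, hv] at this
    split at this <;> omega

lemma fpb_x_succAbove (k : ℕ) (j : Fin (k+2)) (i : Fin (k+1)) :
    fpb F hF k j ((F (k+1)).x (j.succAbove i)) = (F k).x i := by
  rw [fpb, pba_x]
  rw [show (Finset.univ.filter (fun l => j.succAbove l = j.succAbove i)) = {i} from ?_]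
  · simp
  · ext l
    simp [Fin.succAbove_right_injective.eq_iff]

lemma fpb_comp_lt (k : ℕ) (i j : Fin (k+3)) (hij : i.1 < j.1) :
    (fpb F hF k ⟨i.1, (by omega : i.1 < k + 1 + 1)⟩).comp (fpb F hF (k+1) j)
      = (fpb F hF k ⟨j.1 - 1, (by have := j.isLt; omega : j.1 - 1 < k + 1 + 1)⟩).comp
          (fpb F hF (k+1) ⟨i.1, by have := j.isLt; omega⟩) := by
  unfold fpb
  rw [pba_comp, pba_comp]
  congr 1
  funext l
  apply Fin.ext
  have hl := l.isLt; have hj := j.isLt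
  simp [Function.comp_apply, succAbove_val, min_def]
  split_ifs <;> omega

lemma fpb_comp_spb_eq (k : ℕ) (t : ℕ) (ht : t ≤ k + 1) :
    (fpb F hF (k+1) ⟨t, by omega⟩).comp (spb F hF (k+1) t) = AlgHom.id ℂ (F (k+1)).A := by
  unfold fpb spb
  rw [pba_comp, ← pba_id F hF (k+1)]
  congr 1
  funext l
  apply Fin.ext
  have hl := l.isLt
  simp [Function.comp_apply, succAbove_val, min_def, id_eq]
  split_ifs <;> omega

lemma fpb_comp_spb_lt (k : ℕ) (r : ℕ) (hr : r + 1 ≤ k + 1) (i : ℕ) (hi : i ≤ r) :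
    (fpb F hF (k+1) ⟨i, by omega⟩).comp (spb F hF (k+1) (r+1))
      = (spb F hF k r).comp (fpb F hF k ⟨i, by omega⟩) := by
  unfold fpb spb
  rw [pba_comp, pba_comp]
  congr 1
  funext l
  apply Fin.ext
  have hl := l.isLt
  simp [Function.comp_apply, succAbove_val, min_def]
  split_ifs <;> omega

lemma fpb_last_comp_epb (k : ℕ) (i : Fin (k+2)) :
    (fpb F hF (k+1) (Fin.last (k+2))).comp (epb F hF (k+1) i) = AlgHom.id ℂ (F (k+1)).A := by
  unfold fpb epb
  rw [pba_comp, ← pba_id F hF (k+1)]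
  congr 1
  funext l
  apply Fin.ext
  have hl := l.isLt
  simp only [Fin.succAbove_last, Function.comp_apply, id_eq]
  rw [dif_pos (by simpa using l.isLt)]
  simp

lemma fpb_comp_epb_ne (k : ℕ) (j : Fin (k+3)) (hj : j.1 ≤ k + 1) (i : Fin (k+2))
    (hij : i.1 ≠ j.1) :
    ∃ τ : Fin (k+2) → Fin (k+1),
      (fpb F hF (k+1) j).comp (epb F hF (k+1) i)
        = (pba F hF k (k+1) τ).comp (fpb F hF k ⟨j.1, by omega⟩) := by
  have hj3 := j.isLt
  have havoid : ∀ l : Fin (k+2),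
      (((fun l' : Fin (k+3) => if h : l'.1 < k+2 then (⟨l'.1, h⟩ : Fin (k+2)) else i)
        (j.succAbove l)).1 : ℕ) ≠ (⟨j.1, by omega⟩ : Fin (k+2)).1 := by
    intro l
    have hl := l.isLt
    simp only
    rw [succAbove_val]
    have hi2 := i.isLt
    split <;> (try split) <;> (try simp) <;> omega
  obtain ⟨τ, hτ⟩ := factor_through _ _ havoid
  refine ⟨τ, ?_⟩
  unfold fpb epb
  rw [pba_comp, pba_comp]
  have : ((fun l' : Fin (k+3) => if h : l'.1 < k+2 then (⟨l'.1, h⟩ : Fin (k+2)) else i)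
      ∘ j.succAbove) = (⟨j.1, by omega⟩ : Fin (k+2)).succAbove ∘ τ := by
    funext l
    exact congrFun hτ l
  rw [this]

end

-- ===== tensor helpers =====

open TensorProduct

lemma lTT {V A B C : Type} [AddCommGroup V] [Module ℂ V]
    [AddCommGroup A] [Module ℂ A] [AddCommGroup B] [Module ℂ B]
    [AddCommGroup C] [Module ℂ C] (f : B →ₗ[ℂ] C) (g : A →ₗ[ℂ] B) (z : V ⊗[ℂ] A) :
    LinearMap.lTensor V f (LinearMap.lTensor V g z) = LinearMap.lTensor V (f ∘ₗ g) z := by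
  rw [LinearMap.lTensor_comp]
  rfl

lemma lT_lT {V A B C : Type} [AddCommGroup V] [Module ℂ V]
    [Ring A] [Ring B] [Ring C] [Algebra ℂ A] [Algebra ℂ B] [Algebra ℂ C]
    (f : B →ₐ[ℂ] C) (g : A →ₐ[ℂ] B) (z : V ⊗[ℂ] A) :
    LinearMap.lTensor V f.toLinearMap (LinearMap.lTensor V g.toLinearMap z)
      = LinearMap.lTensor V (f.comp g).toLinearMap z := by
  rw [AlgHom.comp_toLinearMap]
  exact lTT _ _ _

lemma rT_lT_comm {V V' A B : Type} [AddCommGroup V] [Module ℂ V]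
    [AddCommGroup V'] [Module ℂ V'] [AddCommGroup A] [Module ℂ A]
    [AddCommGroup B] [Module ℂ B] (T : V →ₗ[ℂ] V') (f : A →ₗ[ℂ] B) (z : V ⊗[ℂ] A) :
    LinearMap.rTensor B T (LinearMap.lTensor V f z)
      = LinearMap.lTensor V' f (LinearMap.rTensor A T z) := by
  have h1 : (LinearMap.rTensor B T).comp (LinearMap.lTensor V f) = TensorProduct.map T f :=
    LinearMap.rTensor_comp_lTensor (f := T) (g := f)
  have h2 : (LinearMap.lTensor V' f).comp (LinearMap.rTensor A T) = TensorProduct.map T f :=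
    LinearMap.lTensor_comp_rTensor (f := T) (g := f)
  rw [← LinearMap.comp_apply, h1, ← h2, LinearMap.comp_apply]

lemma algHom_comp_mulLeft {A B : Type} [Ring A] [Ring B] [Algebra ℂ A] [Algebra ℂ B]
    (φ : A →ₐ[ℂ] B) (x : A) :
    φ.toLinearMap ∘ₗ LinearMap.mulLeft ℂ x = LinearMap.mulLeft ℂ (φ x) ∘ₗ φ.toLinearMap :=
  LinearMap.ext fun y => map_mul φ x y

lemma lT_mulLeft_sum_x {V : Type} [AddCommGroup V] [Module ℂ V] {n : ℕ}
    (Ω : SimplexForms n) (z : V ⊗[ℂ] Ω.A) :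
    ∑ i : Fin (n+1), LinearMap.lTensor V (LinearMap.mulLeft ℂ (Ω.x i)) z = z := by
  rw [← LinearMap.sum_apply]
  have : (∑ i : Fin (n+1), LinearMap.lTensor V (LinearMap.mulLeft ℂ (Ω.x i)))
      = LinearMap.id (M := V ⊗[ℂ] Ω.A) := by
    apply TensorProduct.ext'
    intro v a
    simp only [LinearMap.sum_apply, LinearMap.lTensor_tmul, LinearMap.mulLeft_apply,
      LinearMap.id_apply, ← TensorProduct.tmul_sum, ← Finset.sum_mul, Ω.sum_x, one_mul]
  rw [this, LinearMap.id_apply]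

section
variable (F : ∀ k, SimplexForms k) (hF : ∀ k, IsPolyDeRham (F k))

set_option maxHeartbeats 1000000 in
/-- The key single-simplex extension lemma, with coefficients `V` on the left. -/
lemma EXT (L : ℕ) (V : Type) [AddCommGroup V] [Module ℂ V]
    (b : Fin (L+3) → V ⊗[ℂ] (F (L+1)).A)
    (hcompat : ∀ (i j : Fin (L+3)) (hij : i.1 < j.1),
      LinearMap.lTensor V (fpb F hF L ⟨i.1, (by have := j.isLt; omega : i.1 < L + 1 + 1)⟩).toLinearMap (b j)
        = LinearMap.lTensor V (fpb F hF L ⟨j.1 - 1, (by have := j.isLt; omega : j.1 - 1 < L + 1 + 1)⟩).toLinearMap (b i)) :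
    ∃ δ : V ⊗[ℂ] (F (L+2)).A,
      (∀ i : Fin (L+3), LinearMap.lTensor V (fpb F hF (L+1) i).toLinearMap δ = b i) ∧
      (∀ (V' : Type) [AddCommGroup V'] [Module ℂ V'] (T : V →ₗ[ℂ] V'),
        (∀ i : Fin (L+3), LinearMap.rTensor ((F (L+1)).A) T (b i) = 0) →
          LinearMap.rTensor ((F (L+2)).A) T δ = 0) := by
  have key : ∀ r : ℕ, ∃ δ : V ⊗[ℂ] (F (L+2)).A,
      (∀ i : Fin (L+3), i.1 ≤ r → LinearMap.lTensor V (fpb F hF (L+1) i).toLinearMap δ = b i) ∧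
      (∀ (V' : Type) [AddCommGroup V'] [Module ℂ V'] (T : V →ₗ[ℂ] V'),
        (∀ i : Fin (L+3), LinearMap.rTensor ((F (L+1)).A) T (b i) = 0) →
          LinearMap.rTensor ((F (L+2)).A) T δ = 0) := by
    intro r
    induction r with
    | zero =>
      refine ⟨LinearMap.lTensor V (spb F hF (L+1) 0).toLinearMap (b ⟨0, by omega⟩), ?_, ?_⟩
      · intro i hi
        have hi0 : i = ⟨0, by omega⟩ := Fin.ext (show i.1 = 0 by omega)
        rw [hi0, lT_lT]
        have ceq : (fpb F hF (L+1) ⟨0, by omega⟩).comp (spb F hF (L+1) 0)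
            = AlgHom.id ℂ (F (L+1)).A := fpb_comp_spb_eq F hF L 0 (by omega)
        rw [ceq]
        simp
      · intro V' _ _ T hT
        rw [rT_lT_comm, hT, map_zero]
    | succ r ih =>
      obtain ⟨δr, h1, h2⟩ := ih
      -- the face-wise vanishing of the correction term
      have hec : ∀ (hr : r + 1 ≤ L + 2) (i : Fin (L+3)) (hi : i.1 ≤ r),
          LinearMap.lTensor V (fpb F hF L ⟨i.1, by omega⟩).toLinearMap
            (b ⟨r+1, by omega⟩
              - LinearMap.lTensor V (fpb F hF (L+1) ⟨r+1, by omega⟩).toLinearMap δr) = 0 := by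
        intro hr i hi
        rw [map_sub]
        have A1 : LinearMap.lTensor V (fpb F hF L ⟨i.1, by omega⟩).toLinearMap
            (b ⟨r+1, by omega⟩)
            = LinearMap.lTensor V (fpb F hF L ⟨r, by omega⟩).toLinearMap (b i) :=
          hcompat i ⟨r+1, by omega⟩ (by simp; omega)
        have A2 : LinearMap.lTensor V (fpb F hF L ⟨i.1, by omega⟩).toLinearMap
            (LinearMap.lTensor V (fpb F hF (L+1) ⟨r+1, by omega⟩).toLinearMap δr)
            = LinearMap.lTensor V (fpb F hF L ⟨r, by omega⟩).toLinearMap (b i) := by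
          rw [lT_lT]
          have ceq2 : (fpb F hF L ⟨i.1, by omega⟩).comp (fpb F hF (L+1) ⟨r+1, by omega⟩)
              = (fpb F hF L ⟨r, by omega⟩).comp (fpb F hF (L+1) i) :=
            fpb_comp_lt F hF L i ⟨r+1, by omega⟩ (by simp; omega)
          rw [ceq2, ← lT_lT, h1 i hi]
        rw [A1, A2, sub_self]
      by_cases hdeg : r + 1 ≤ L + 1
      · -- degeneracy step
        refine ⟨δr + LinearMap.lTensor V (spb F hF (L+1) (r+1)).toLinearMap
            (b ⟨r+1, by omega⟩
              - LinearMap.lTensor V (fpb F hF (L+1) ⟨r+1, by omega⟩).toLinearMap δr),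
          ?_, ?_⟩
        · intro i hi
          rcases Nat.lt_or_ge i.1 (r+1) with hlt | hge
          · have hir : i.1 ≤ r := by omega
            rw [map_add, h1 i hir, lT_lT]
            have ceq : (fpb F hF (L+1) i).comp (spb F hF (L+1) (r+1))
                = (spb F hF L r).comp (fpb F hF L ⟨i.1, by omega⟩) :=
              fpb_comp_spb_lt F hF L r (by omega) i.1 hir
            rw [ceq, ← lT_lT, hec (by omega) i hir, map_zero, add_zero]
          · have hieq : i = ⟨r+1, by omega⟩ := Fin.ext (show i.1 = r+1 by omega)
            rw [hieq, map_add, lT_lT]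
            have ceq : (fpb F hF (L+1) ⟨r+1, by omega⟩).comp (spb F hF (L+1) (r+1))
                = AlgHom.id ℂ (F (L+1)).A := fpb_comp_spb_eq F hF L (r+1) hdeg
            rw [ceq]
            simp
        · intro V' _ _ T hT
          rw [map_add, h2 V' T hT, zero_add, rT_lT_comm, map_sub, hT, rT_lT_comm,
            h2 V' T hT, map_zero, sub_zero, map_zero]
      · by_cases hfin : r + 1 = L + 2
        · -- final step
          refine ⟨δr + ∑ i : Fin (L+2), LinearMap.lTensor V
              ((LinearMap.mulLeft ℂ ((F (L+2)).x i.castSucc))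
                ∘ₗ (epb F hF (L+1) i).toLinearMap)
              (b ⟨r+1, by omega⟩
                - LinearMap.lTensor V (fpb F hF (L+1) ⟨r+1, by omega⟩).toLinearMap δr),
            ?_, ?_⟩
          · intro i' hi'
            rw [map_add, map_sum]
            rcases Nat.lt_or_ge i'.1 (L+2) with hlt | hge
            · -- lower face: the correction has zero face
              have hsum : ∀ i : Fin (L+2),
                  LinearMap.lTensor V (fpb F hF (L+1) i').toLinearMap
                    (LinearMap.lTensor V
                      ((LinearMap.mulLeft ℂ ((F (L+2)).x i.castSucc))
                        ∘ₗ (epb F hF (L+1) i).toLinearMap)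
                      (b ⟨r+1, by omega⟩
                        - LinearMap.lTensor V
                            (fpb F hF (L+1) ⟨r+1, by omega⟩).toLinearMap δr)) = 0 := by
                intro i
                rw [lTT, ← LinearMap.comp_assoc,
                  show (fpb F hF (L+1) i').toLinearMap ∘ₗ
                      LinearMap.mulLeft ℂ ((F (L+2)).x i.castSucc)
                    = LinearMap.mulLeft ℂ (fpb F hF (L+1) i' ((F (L+2)).x i.castSucc))
                        ∘ₗ (fpb F hF (L+1) i').toLinearMap from
                    algHom_comp_mulLeft _ _]
                by_cases hii : i.1 = i'.1
                · rw [fpb_x_self F hF (L+1) i' i.castSucc (by simpa using hii)]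
                  rw [LinearMap.mulLeft_zero_eq_zero]
                  simp
                · obtain ⟨τ, hτ⟩ := fpb_comp_epb_ne F hF L i' (by omega) i hii
                  rw [LinearMap.comp_assoc,
                    show (fpb F hF (L+1) i').toLinearMap ∘ₗ (epb F hF (L+1) i).toLinearMap
                      = ((fpb F hF (L+1) i').comp (epb F hF (L+1) i)).toLinearMap from rfl,
                    hτ, AlgHom.comp_toLinearMap, ← LinearMap.comp_assoc, ← lTT, ← lTT,
                    hec (by omega) (⟨i'.1, by omega⟩ : Fin (L+3)) (by simp; omega)]
                  simp
              rw [Finset.sum_congr rfl (fun i _ => hsum i), Finset.sum_const_zero, add_zero]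
              exact h1 i' (by omega)
            · -- top face
              have hi'eq : i' = ⟨L+2, by omega⟩ := Fin.ext (show i'.1 = L+2 by omega)
              have hsum : ∀ i : Fin (L+2),
                  LinearMap.lTensor V (fpb F hF (L+1) ⟨L+2, by omega⟩).toLinearMap
                    (LinearMap.lTensor V
                      ((LinearMap.mulLeft ℂ ((F (L+2)).x i.castSucc))
                        ∘ₗ (epb F hF (L+1) i).toLinearMap)
                      (b ⟨r+1, by omega⟩
                        - LinearMap.lTensor V
                            (fpb F hF (L+1) ⟨r+1, by omega⟩).toLinearMap δr))
                  = LinearMap.lTensor V (LinearMap.mulLeft ℂ ((F (L+1)).x i))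
                      (b ⟨r+1, by omega⟩
                        - LinearMap.lTensor V
                            (fpb F hF (L+1) ⟨r+1, by omega⟩).toLinearMap δr) := by
                intro i
                rw [lTT, ← LinearMap.comp_assoc,
                  show (fpb F hF (L+1) ⟨L+2, by omega⟩).toLinearMap ∘ₗ
                      LinearMap.mulLeft ℂ ((F (L+2)).x i.castSucc)
                    = LinearMap.mulLeft ℂ
                        (fpb F hF (L+1) ⟨L+2, by omega⟩ ((F (L+2)).x i.castSucc))
                        ∘ₗ (fpb F hF (L+1) ⟨L+2, by omega⟩).toLinearMap from
                    algHom_comp_mulLeft _ _]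
                have hx : fpb F hF (L+1) ⟨L+2, by omega⟩ ((F (L+2)).x i.castSucc)
                    = (F (L+1)).x i := by
                  have h0 : (⟨L+2, by omega⟩ : Fin (L+3)) = Fin.last (L+2) := rfl
                  have := fpb_x_succAbove F hF (L+1) (Fin.last (L+2)) i
                  rw [Fin.succAbove_last] at this
                  rw [h0, this]
                have hid : (fpb F hF (L+1) ⟨L+2, by omega⟩).comp (epb F hF (L+1) i)
                    = AlgHom.id ℂ (F (L+1)).A := fpb_last_comp_epb F hF L i
                rw [hx, LinearMap.comp_assoc,
                  show (fpb F hF (L+1) ⟨L+2, by omega⟩).toLinearMap ∘ₗ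
                      (epb F hF (L+1) i).toLinearMap
                    = ((fpb F hF (L+1) ⟨L+2, by omega⟩).comp (epb F hF (L+1) i)).toLinearMap
                    from rfl, hid]
                rw [show (AlgHom.id ℂ (F (L+1)).A).toLinearMap = LinearMap.id from rfl]
                rw [LinearMap.comp_id]
              rw [hi'eq]
              rw [Finset.sum_congr rfl (fun i _ => hsum i)]
              rw [lT_mulLeft_sum_x]
              have : (⟨r+1, by omega⟩ : Fin (L+3)) = ⟨L+2, by omega⟩ := Fin.ext (show r+1 = L+2 from hfin)
              rw [this]
              abel
          · intro V' _ _ T hT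
            rw [map_add, h2 V' T hT, zero_add, map_sum]
            have hz : ∀ i : Fin (L+2),
                LinearMap.rTensor ((F (L+2)).A) T
                  (LinearMap.lTensor V
                    ((LinearMap.mulLeft ℂ ((F (L+2)).x i.castSucc))
                      ∘ₗ (epb F hF (L+1) i).toLinearMap)
                    (b ⟨r+1, by omega⟩
                      - LinearMap.lTensor V
                          (fpb F hF (L+1) ⟨r+1, by omega⟩).toLinearMap δr)) = 0 := by
              intro i
              rw [rT_lT_comm, map_sub, hT, rT_lT_comm, h2 V' T hT, map_zero, sub_zero,
                map_zero]
            rw [Finset.sum_congr rfl (fun i _ => hz i), Finset.sum_const_zero]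
        · -- r ≥ L+2 : nothing to do
          exact ⟨δr, fun i hi => h1 i (by have := i.isLt; omega), h2⟩
  obtain ⟨δ, hδ, hT⟩ := key (L+2)
  exact ⟨δ, fun i => hδ i (by have := i.isLt; omega), hT⟩

end

lemma comm_rT {W A B : Type} [AddCommGroup W] [Module ℂ W] [AddCommGroup A] [Module ℂ A]
    [AddCommGroup B] [Module ℂ B] (f : A →ₗ[ℂ] B) (z : A ⊗[ℂ] W) :
    TensorProduct.comm ℂ B W (LinearMap.rTensor W f z)
      = LinearMap.lTensor W f (TensorProduct.comm ℂ A W z) := by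
  induction z using TensorProduct.induction_on with
  | zero => simp
  | tmul a w => simp
  | add x y hx hy => simp only [map_add, hx, hy]


set_option maxHeartbeats 1000000 in
/-- (Extension lemma for products of simplices.)
Given coface pullbacks `pb k i = d_{i,k+1}^*`, forms
`α j ∈ A^*(Δ_{M+1} × Δ_{N+2})` and `β i ∈ A^*(Δ_{M+2} × Δ_{N+1})` satisfying the
three boundary compatibilities (so that they define an element of
`A^*(∂(Δ_{M+2} × Δ_{N+2}))`), there exists `γ ∈ A^*(Δ_{M+2} × Δ_{N+2})` with
`(d_{j}^* ⊗ id)(γ) = α j` and `(id ⊗ d_{i}^*)(γ) = β i` for all `i`, `j`. -/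
theorem product_simplex_extension
    (F : ∀ k, SimplexForms k) (hF : ∀ k, IsPolyDeRham (F k))
    (pb : ∀ (k : ℕ) (i : Fin (k + 2)), (F (k + 1)).A →ₐ[ℂ] (F k).A)
    (hpb : ∀ (k : ℕ) (i : Fin (k + 2)),
      PullbackProp (F (k + 1)) (F k) (Fin.succAbove i) (pb k i))
    (M N : ℕ)
    (α : Fin (M + 3) → ((F (M + 1)).A ⊗[ℂ] (F (N + 2)).A))
    (β : Fin (N + 3) → ((F (M + 2)).A ⊗[ℂ] (F (N + 1)).A))
    (hαα : ∀ (i j : Fin (M + 3)) (hij : i.1 < j.1),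
      LinearMap.rTensor ((F (N + 2)).A)
          (pb M ⟨i.1, by have := j.isLt; omega⟩).toLinearMap (α j) =
        LinearMap.rTensor ((F (N + 2)).A)
          (pb M ⟨j.1 - 1, by have := j.isLt; omega⟩).toLinearMap (α i))
    (hββ : ∀ (i j : Fin (N + 3)) (hij : i.1 < j.1),
      LinearMap.lTensor ((F (M + 2)).A)
          (pb N ⟨i.1, by have := j.isLt; omega⟩).toLinearMap (β j) =
        LinearMap.lTensor ((F (M + 2)).A)
          (pb N ⟨j.1 - 1, by have := j.isLt; omega⟩).toLinearMap (β i))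
    (hαβ : ∀ (i : Fin (N + 3)) (j : Fin (M + 3)),
      LinearMap.lTensor ((F (M + 1)).A) (pb (N + 1) i).toLinearMap (α j) =
        LinearMap.rTensor ((F (N + 1)).A) (pb (M + 1) j).toLinearMap (β i)) :
    ∃ γ : (F (M + 2)).A ⊗[ℂ] (F (N + 2)).A,
      (∀ j : Fin (M + 3),
        LinearMap.rTensor ((F (N + 2)).A) (pb (M + 1) j).toLinearMap γ = α j) ∧
      (∀ i : Fin (N + 3),
        LinearMap.lTensor ((F (M + 2)).A) (pb (N + 1) i).toLinearMap γ = β i) := by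
  have hpb_eq : ∀ (k : ℕ) (i : Fin (k+2)), pb k i = fpb F hF k i :=
    fun k i => pba_unique F hF (hpb k i)
  simp only [hpb_eq] at hαα hββ hαβ
  simp only [hpb_eq]
  -- Step 1: solve the α-equations
  obtain ⟨δ1, hδ1, -⟩ := EXT F hF M ((F (N + 2)).A)
    (fun j => TensorProduct.comm ℂ ((F (M + 1)).A) ((F (N + 2)).A) (α j))
    (by
      intro i j hij
      rw [← comm_rT, ← comm_rT]
      exact congrArg _ (hαα i j hij))
  set γ1 : (F (M + 2)).A ⊗[ℂ] (F (N + 2)).A :=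
    (TensorProduct.comm ℂ ((F (M + 2)).A) ((F (N + 2)).A)).symm δ1 with hγ1def
  have hγ1 : ∀ j : Fin (M + 3),
      LinearMap.rTensor ((F (N + 2)).A) (fpb F hF (M + 1) j).toLinearMap γ1 = α j := by
    intro j
    apply (TensorProduct.comm ℂ ((F (M + 1)).A) ((F (N + 2)).A)).injective
    rw [comm_rT, hγ1def, LinearEquiv.apply_symm_apply]
    exact hδ1 j
  -- Step 2: the corrected β-data
  have hbp0 : ∀ (j : Fin (M + 3)) (i : Fin (N + 3)),
      LinearMap.rTensor ((F (N + 1)).A) (fpb F hF (M + 1) j).toLinearMap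
        (β i - LinearMap.lTensor ((F (M + 2)).A) (fpb F hF (N + 1) i).toLinearMap γ1)
        = 0 := by
    intro j i
    rw [map_sub, rT_lT_comm, hγ1 j, ← hαβ i j, sub_self]
  -- Step 3: solve the corrected β-equations
  obtain ⟨δ2, hδ2, hT2⟩ := EXT F hF N ((F (M + 2)).A)
    (fun i => β i - LinearMap.lTensor ((F (M + 2)).A) (fpb F hF (N + 1) i).toLinearMap γ1)
    (by
      intro i j hij
      have C2 : LinearMap.lTensor ((F (M + 2)).A)
            (fpb F hF N ⟨i.1, by have := j.isLt; omega⟩).toLinearMap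
            (LinearMap.lTensor ((F (M + 2)).A) (fpb F hF (N + 1) j).toLinearMap γ1)
          = LinearMap.lTensor ((F (M + 2)).A)
            (fpb F hF N ⟨j.1 - 1, by have := j.isLt; omega⟩).toLinearMap
            (LinearMap.lTensor ((F (M + 2)).A) (fpb F hF (N + 1) i).toLinearMap γ1) := by
        rw [lT_lT, lT_lT]
        exact congrArg (fun f => LinearMap.lTensor ((F (M + 2)).A) (AlgHom.toLinearMap f) γ1)
          (fpb_comp_lt F hF N i j hij)
      rw [map_sub, map_sub, hββ i j hij, C2])
  -- Assemble
  refine ⟨γ1 + δ2, ?_, ?_⟩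
  · intro j
    rw [map_add, hγ1 j]
    have : LinearMap.rTensor ((F (N + 2)).A) (fpb F hF (M + 1) j).toLinearMap δ2 = 0 :=
      hT2 ((F (M + 1)).A) (fpb F hF (M + 1) j).toLinearMap (fun i => hbp0 j i)
    rw [this, add_zero]
  · intro i
    rw [map_add, hδ2 i]
    abel
end
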